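/- For any indices 0 ≤ a ≤ b ≤ n, the endomorphism ring of the interval module I[a,b] (in the category of persistence modules of length n over a field k) is isomorphic as a k-algebra to k; in particular, I[a,b] is an indecomposable persistence module, i.e., it is not isomorphic to a direct sum of two nonzero persistence modules. -/

import Mathlib

/-!
STATEMENT 2: For any indices `0 ≤ a ≤ b ≤ n`, the endomorphism ring of the interval
module `I[a,b]` (in the category of persistence modules of length `n` over a field `k`)
is isomorphic as a `k`-algebra to `k`; in particular, `I[a,b]` is an indecomposable
persistence module, i.e. it is not isomorphic to a direct sum of two nonzero
persistence modules.

An endomorphism of `I[a,b]` is a family of linear endomorphisms of its spaces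
commuting with the structure maps; these form a `k`-subalgebra of the product of the
endomorphism algebras of the individual spaces, with multiplication given by
composition.
-/

/-- The `i`-th space of the interval module `I[a,b]`, realized as a submodule of `k`:
it is all of `k` (i.e. `⊤`) for `a ≤ i ≤ b` and the zero submodule otherwise. -/
def intervalSubmodule (k : Type*) [Field k] (a b i : ℕ) : Submodule k k :=
  if a ≤ i ∧ i ≤ b then ⊤ else ⊥

open Classical in
/-- The structure map of the interval module `I[a,b]` from index `i` to index `j`:
the (identity-like) inclusion whenever it exists, and zero otherwise.  For `j = i + 1`
this is the identity of `k` when `a ≤ i < b` (both spaces being `⊤`) and zero otherwise. -/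
noncomputable def intervalStep (k : Type*) [Field k] (a b i j : ℕ) :
    intervalSubmodule k a b i →ₗ[k] intervalSubmodule k a b j :=
  if h : intervalSubmodule k a b i ≤ intervalSubmodule k a b j then Submodule.inclusion h
  else 0

/-- The endomorphism ring of the interval module `I[a,b]`, as the `k`-subalgebra of
`∀ i, End (I[a,b]_i)` consisting of those families of endomorphisms that commute with
the structure maps of `I[a,b]` (i.e. natural transformations `I[a,b] ⟶ I[a,b]`). -/
noncomputable def intervalEnd (k : Type*) [Field k] (n a b : ℕ) :
    Subalgebra k (∀ i : Fin (n + 1), Module.End k (intervalSubmodule k a b (i : ℕ))) where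
  carrier := {η | ∀ i : Fin n,
    (η i.succ).comp (intervalStep k a b (i : ℕ) ((i : ℕ) + 1)) =
      (intervalStep k a b (i : ℕ) ((i : ℕ) + 1)).comp (η i.castSucc)}
  mul_mem' := by
    intro η ξ hη hξ i
    have h1 := hη i
    have h2 := hξ i
    simp only [Pi.mul_apply, Module.End.mul_eq_comp, LinearMap.comp_assoc, h2] at *
    rw [← LinearMap.comp_assoc, h1, LinearMap.comp_assoc]
  one_mem' := by
    intro i
    simp only [Pi.one_apply, Module.End.one_eq_id, LinearMap.id_comp, LinearMap.comp_id]
  add_mem' := by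
    intro η ξ hη hξ i
    simp only [Pi.add_apply, LinearMap.add_comp, LinearMap.comp_add, hη i, hξ i]
  zero_mem' := by
    intro i
    simp only [Pi.zero_apply, LinearMap.zero_comp, LinearMap.comp_zero]
  algebraMap_mem' := by
    intro c i
    ext v
    simp [Module.algebraMap_end_apply, Pi.algebraMap_apply, map_smul]

/-!
Inside the interval every space of `I[a,b]` is the line `k`, on which an endomorphism acts by a
scalar; commuting with the structure maps, which are identities there, forces these scalars to
agree, so the endomorphism algebra is the image of `k`. A decomposition `I[a,b] ≅ A ⊕ B` yields
the idempotent endomorphism projecting onto `A`; in `k` it must be `0` or `1`, so `A` or `B`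
vanishes everywhere.
-/

variable {k : Type*} [Field k] {a b : ℕ}

lemma intervalSubmodule_eq_top {m : ℕ} (hm : a ≤ m ∧ m ≤ b) :
    intervalSubmodule k a b m = ⊤ := if_pos hm

lemma intervalSubmodule_eq_bot {m : ℕ} (hm : ¬(a ≤ m ∧ m ≤ b)) :
    intervalSubmodule k a b m = ⊥ := if_neg hm

lemma subsingleton_intervalSubmodule {m : ℕ} (hm : ¬(a ≤ m ∧ m ≤ b)) :
    Subsingleton (intervalSubmodule k a b m) := by
  rw [intervalSubmodule_eq_bot hm]
  infer_instance

lemma one_mem_intervalSubmodule {m : ℕ} (hm : a ≤ m ∧ m ≤ b) :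
    (1 : k) ∈ intervalSubmodule k a b m := by
  simp [intervalSubmodule_eq_top hm]

lemma coe_intervalStep {i j : ℕ} (hi : a ≤ i ∧ i ≤ b) (hj : a ≤ j ∧ j ≤ b)
    (v : intervalSubmodule k a b i) : (intervalStep k a b i j v : k) = v := by
  have hle : intervalSubmodule k a b i ≤ intervalSubmodule k a b j := by
    rw [intervalSubmodule_eq_top hi, intervalSubmodule_eq_top hj]
  rw [intervalStep, dif_pos hle]
  rfl

def intervalScalar {m : ℕ} (hm : a ≤ m ∧ m ≤ b) (f : Module.End k (intervalSubmodule k a b m)) :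
    k :=
  f ⟨1, one_mem_intervalSubmodule hm⟩

lemma coe_end_apply_intervalSubmodule {m : ℕ} (hm : a ≤ m ∧ m ≤ b)
    (f : Module.End k (intervalSubmodule k a b m)) (v : intervalSubmodule k a b m) :
    (f v : k) = intervalScalar hm f * v := by
  have hv : v = (v : k) • (⟨1, one_mem_intervalSubmodule hm⟩ : intervalSubmodule k a b m) := by
    ext; simp
  rw [hv, map_smul, Submodule.coe_smul, smul_eq_mul, intervalScalar, mul_comm]
  simp

variable {n : ℕ} {η : ∀ i : Fin (n + 1), Module.End k (intervalSubmodule k a b (i : ℕ))}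

lemma intervalScalar_succ (hη : η ∈ intervalEnd k n a b) (i : Fin n)
    (hi : a ≤ (i : ℕ) ∧ (i : ℕ) ≤ b) (hi' : a ≤ (i : ℕ) + 1 ∧ (i : ℕ) + 1 ≤ b) :
    intervalScalar hi' (η i.succ) = intervalScalar hi (η i.castSucc) := by
  have h := congrArg Subtype.val (LinearMap.congr_fun (hη i) ⟨1, one_mem_intervalSubmodule hi⟩)
  simp only [LinearMap.comp_apply] at h
  rwa [coe_end_apply_intervalSubmodule hi', coe_intervalStep hi hi', coe_intervalStep hi hi',
    mul_one] at h

lemma intervalScalar_eq_of_le (hη : η ∈ intervalEnd k n a b) {i j : ℕ} (hij : i ≤ j)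
    (hi : a ≤ i ∧ i ≤ b) (hj : a ≤ j ∧ j ≤ b) (hjn : j < n + 1) :
    intervalScalar hj (η ⟨j, hjn⟩) = intervalScalar hi (η ⟨i, by omega⟩) := by
  induction j, hij using Nat.le_induction with
  | base => rfl
  | succ j hij ih =>
    exact (intervalScalar_succ hη ⟨j, by omega⟩ ⟨hi.1.trans hij, j.le_succ.trans hj.2⟩ hj).trans
      (ih _ _)

lemma intervalScalar_eq (hη : η ∈ intervalEnd k n a b) {i j : Fin (n + 1)}
    (hi : a ≤ (i : ℕ) ∧ (i : ℕ) ≤ b) (hj : a ≤ (j : ℕ) ∧ (j : ℕ) ≤ b) :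
    intervalScalar hi (η i) = intervalScalar hj (η j) := by
  rcases le_total i j with hij | hji
  · exact (intervalScalar_eq_of_le hη hij hi hj j.2).symm
  · exact intervalScalar_eq_of_le hη hji hj hi i.2

theorem intervalEnd_eq_bot : intervalEnd k n a b = ⊥ := by
  refine eq_bot_iff.mpr fun η hη => Algebra.mem_bot.mpr ?_
  by_cases h : ∃ i : Fin (n + 1), a ≤ (i : ℕ) ∧ (i : ℕ) ≤ b
  · obtain ⟨i₀, hi₀⟩ := h
    refine ⟨intervalScalar hi₀ (η i₀), funext fun i => LinearMap.ext fun v => ?_⟩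
    by_cases hi : a ≤ (i : ℕ) ∧ (i : ℕ) ≤ b
    · ext
      rw [coe_end_apply_intervalSubmodule hi (η i), intervalScalar_eq hη hi hi₀]
      simp [Module.algebraMap_end_apply]
    · have := subsingleton_intervalSubmodule (k := k) hi
      exact Subsingleton.elim _ _
  · refine ⟨0, funext fun i => LinearMap.ext fun v => ?_⟩
    have := subsingleton_intervalSubmodule (k := k) fun hi => h ⟨i, hi⟩
    exact Subsingleton.elim _ _

theorem nonempty_intervalEnd_algEquiv (hab : a ≤ b) (hbn : b ≤ n) :
    Nonempty (intervalEnd k n a b ≃ₐ[k] k) := by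
  have : Nontrivial (intervalSubmodule k a b a) := by
    rw [Submodule.nontrivial_iff_ne_bot, intervalSubmodule_eq_top ⟨le_rfl, hab⟩]
    exact top_ne_bot
  have : Nontrivial (∀ i : Fin (n + 1), Module.End k (intervalSubmodule k a b i)) :=
    Pi.nontrivial_at (⟨a, by omega⟩ : Fin (n + 1))
  exact ⟨(Subalgebra.equivOfEq _ _ intervalEnd_eq_bot).trans (Algebra.botEquiv k _)⟩

lemma eq_zero_or_eq_one_of_mem_intervalEnd (hab : a ≤ b) (hbn : b ≤ n)
    (hη : η ∈ intervalEnd k n a b) (hη' : IsIdempotentElem η) : η = 0 ∨ η = 1 := by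
  obtain ⟨ψ⟩ := nonempty_intervalEnd_algEquiv (k := k) hab hbn
  have h : IsIdempotentElem (⟨η, hη⟩ : intervalEnd k n a b) := Subtype.ext hη'
  rcases IsIdempotentElem.iff_eq_zero_or_one.mp (h.map ψ) with h0 | h1
  · exact Or.inl (congrArg Subtype.val (ψ.map_eq_zero_iff.mp h0))
  · exact Or.inr (congrArg Subtype.val (ψ.map_eq_one_iff.mp h1))

section Decomposition

variable {ι : Type*} {V A B : ι → Type*} [∀ i, AddCommGroup (V i)] [∀ i, Module k (V i)]
  [∀ i, AddCommGroup (A i)] [∀ i, Module k (A i)] [∀ i, AddCommGroup (B i)] [∀ i, Module k (B i)]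

def fstProjection (e : ∀ i, V i ≃ₗ[k] A i × B i) (i : ι) : Module.End k (V i) :=
  (e i).symm.toLinearMap ∘ₗ LinearMap.inl k _ _ ∘ₗ LinearMap.fst k _ _ ∘ₗ (e i).toLinearMap

variable (e : ∀ i, V i ≃ₗ[k] A i × B i)

@[simp]
lemma apply_fstProjection (i : ι) (v : V i) : e i (fstProjection e i v) = ((e i v).1, 0) := by
  simp [fstProjection]

lemma isIdempotentElem_fstProjection : IsIdempotentElem (fstProjection e) := by
  funext i
  refine LinearMap.ext fun v => (e i).injective ?_
  simp

lemma subsingleton_of_fstProjection_eq_zero (h : fstProjection e = 0) (i : ι) :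
    Subsingleton (A i) := by
  refine subsingleton_of_forall_eq 0 fun x => ?_
  have := congrArg (e i) (LinearMap.congr_fun (congrFun h i) ((e i).symm (x, 0)))
  simpa using this

lemma subsingleton_of_fstProjection_eq_one (h : fstProjection e = 1) (i : ι) :
    Subsingleton (B i) := by
  refine subsingleton_of_forall_eq 0 fun y => ?_
  have := congrArg (e i) (LinearMap.congr_fun (congrFun h i) ((e i).symm (0, y)))
  simpa [eq_comm] using this

end Decomposition

lemma fstProjection_mem_intervalEnd {A B : Fin (n + 1) → Type*}
    [∀ i, AddCommGroup (A i)] [∀ i, Module k (A i)] [∀ i, AddCommGroup (B i)] [∀ i, Module k (B i)]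
    (φA : ∀ i : Fin n, A i.castSucc →ₗ[k] A i.succ) (φB : ∀ i : Fin n, B i.castSucc →ₗ[k] B i.succ)
    (e : ∀ i : Fin (n + 1), intervalSubmodule k a b (i : ℕ) ≃ₗ[k] A i × B i)
    (he : ∀ (i : Fin n) (v : intervalSubmodule k a b (i : ℕ)),
      e i.succ (intervalStep k a b (i : ℕ) ((i : ℕ) + 1) v) =
        LinearMap.prodMap (φA i) (φB i) (e i.castSucc v)) :
    fstProjection e ∈ intervalEnd k n a b := by
  intro i
  refine LinearMap.ext fun v => (e i.succ).injective ?_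
  simp [he]

/-- **The interval module has endomorphism algebra `k` and is indecomposable.**
For `a ≤ b ≤ n`, the endomorphism ring of the interval module `I[a,b]` is isomorphic
as a `k`-algebra to `k`, and `I[a,b]` is not isomorphic (as a persistence module of
length `n`) to a direct sum of two nonzero persistence modules. -/
theorem interval_module_end_eq_k_and_indecomposable
    (k : Type) [Field k] (n a b : ℕ) (hab : a ≤ b) (hbn : b ≤ n) :
    Nonempty ((intervalEnd k n a b) ≃ₐ[k] k) ∧
    ¬ ∃ (A B : Fin (n + 1) → Type)
        (_ : ∀ i, AddCommGroup (A i)) (_ : ∀ i, Module k (A i))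
        (_ : ∀ i, AddCommGroup (B i)) (_ : ∀ i, Module k (B i))
        (φA : ∀ i : Fin n, A i.castSucc →ₗ[k] A i.succ)
        (φB : ∀ i : Fin n, B i.castSucc →ₗ[k] B i.succ)
        (e : ∀ i : Fin (n + 1), intervalSubmodule k a b (i : ℕ) ≃ₗ[k] A i × B i),
      (∃ i, Nontrivial (A i)) ∧ (∃ i, Nontrivial (B i)) ∧
      ∀ (i : Fin n) (v : intervalSubmodule k a b (i : ℕ)),
        e i.succ (intervalStep k a b (i : ℕ) ((i : ℕ) + 1) v) =
          LinearMap.prodMap (φA i) (φB i) (e i.castSucc v) := by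
  refine ⟨nonempty_intervalEnd_algEquiv hab hbn, ?_⟩
  rintro ⟨A, B, _, _, _, _, φA, φB, e, ⟨i, hA⟩, ⟨j, hB⟩, he⟩
  rcases eq_zero_or_eq_one_of_mem_intervalEnd hab hbn (fstProjection_mem_intervalEnd φA φB e he)
    (isIdempotentElem_fstProjection e) with h0 | h1
  · exact not_subsingleton (A i) (subsingleton_of_fstProjection_eq_zero e h0 i)
  · exact not_subsingleton (B j) (subsingleton_of_fstProjection_eq_one e h1 j)
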